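/- arXiv:1901.09119 — 4 statements merged into one kernel-verified Lean document; each statement's English description precedes it below -/
import Mathlib

section
/- Let η ∈ ℂ with |η| < 1, κ = Im(η) ∈ (-1,1), ρ = √(1-|η|²), and e^{iφ} = κ + i√(1-κ²). Let C = [[-η, ρ],[ρ, conj(η)]]. Define p = (1 - Re(η)/√(1-κ²))/2 and q = (1 + Re(η)/√(1-κ²))/2. Then the vector (√p, √q)ᵀ is a unit eigenvector of C with eigenvalue -i e^{iφ}. -/
/-!
Write `η = a + iκ` and `s = √(1 - κ²)`, so that `ρ² = s² - a²` and `a = s t` with `|t| < 1`.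
With `p = (1 - t)/2`, `q = (1 + t)/2` one has `ρ = 2 s √p √q`, whence the two relations
`ρ √q = (s + a) √p` and `ρ √p = (s - a) √q`. These are exactly the two rows of
`C (√p, √q)ᵀ = (s - iκ) (√p, √q)ᵀ`, and `s - iκ = -i e^{iφ}`.
-/

open Complex Matrix

lemma coin_mulVec_eq_smul_of_mul_eq (η : ℂ) {ρ s x y : ℝ}
    (hy : ρ * y = (s + η.re) * x) (hx : ρ * x = (s - η.re) * y) :
    !![-η, (ρ : ℂ); (ρ : ℂ), (starRingEnd ℂ) η] *ᵥ ![(x : ℂ), (y : ℂ)]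
      = ((s : ℂ) - η.im * I) • ![(x : ℂ), (y : ℂ)] := by
  ext i
  fin_cases i <;> apply Complex.ext <;> simp <;> linarith

lemma Real.sqrt_one_sub_sq_eq {t : ℝ} (ht : |t| ≤ 1) :
    √(1 - t ^ 2) = 2 * √((1 - t) / 2) * √((1 + t) / 2) := by
  obtain ⟨h₁, h₂⟩ := abs_le.mp ht
  rw [mul_assoc, ← Real.sqrt_mul (by linarith), show (2 : ℝ) = √(2 ^ 2) by simp,
    ← Real.sqrt_mul (by positivity)]
  ring_nf

lemma Real.sqrt_sq_sub_sq_mul_sqrt {s t : ℝ} (hs : 0 ≤ s) (ht : |t| ≤ 1) :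
    √(s ^ 2 - (s * t) ^ 2) * √((1 + t) / 2) = (s + s * t) * √((1 - t) / 2) := by
  have hq : 0 ≤ (1 + t) / 2 := by linarith [neg_abs_le t]
  calc √(s ^ 2 - (s * t) ^ 2) * √((1 + t) / 2)
      = s * √(1 - t ^ 2) * √((1 + t) / 2) := by
        rw [show s ^ 2 - (s * t) ^ 2 = s ^ 2 * (1 - t ^ 2) by ring,
          Real.sqrt_mul (sq_nonneg s), Real.sqrt_sq hs]
    _ = 2 * s * √((1 - t) / 2) * √((1 + t) / 2) ^ 2 := by
        rw [Real.sqrt_one_sub_sq_eq ht]; ring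
    _ = (s + s * t) * √((1 - t) / 2) := by
        rw [Real.sq_sqrt hq]; ring

theorem stmt_5_general (η : ℂ) (hη : ‖η‖ < 1)
    (κ : ℝ) (hκdef : κ = η.im)
    (ρ : ℝ) (hρ : ρ = Real.sqrt (1 - ‖η‖ ^ 2))
    (eiφ : ℂ) (heiφ : eiφ = (κ:ℂ) + I * (Real.sqrt (1 - κ^2) : ℝ))
    (C : Matrix (Fin 2) (Fin 2) ℂ) (hC : C = !![-η, (ρ:ℂ); (ρ:ℂ), (starRingEnd ℂ) η])
    (p q : ℝ)
    (hp : p = (1 - η.re / Real.sqrt (1 - κ^2)) / 2)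
    (hq : q = (1 + η.re / Real.sqrt (1 - κ^2)) / 2) :
    C.mulVec ![(Real.sqrt p : ℂ), (Real.sqrt q : ℂ)]
      = (-I * eiφ) • ![(Real.sqrt p : ℂ), (Real.sqrt q : ℂ)] ∧
    Real.sqrt p ^ 2 + Real.sqrt q ^ 2 = 1 := by
  set s := √(1 - κ ^ 2)
  set t := η.re / s
  have hnorm : ‖η‖ ^ 2 = η.re ^ 2 + κ ^ 2 := by
    rw [Complex.sq_norm, Complex.normSq_apply, hκdef]; ring
  have hs : 0 < s := Real.sqrt_pos.mpr (by nlinarith [norm_nonneg η])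
  have hre : η.re = s * t := (mul_div_cancel₀ _ hs.ne').symm
  have ht : |t| ≤ 1 := by
    rw [abs_div, abs_of_pos hs, div_le_one hs]
    exact Real.abs_le_sqrt (by nlinarith [norm_nonneg η])
  have hρ' : ρ = √(s ^ 2 - (s * t) ^ 2) := by
    rw [hρ, ← hre, Real.sq_sqrt (by nlinarith [norm_nonneg η]), hnorm]; ring_nf
  have hp0 : 0 ≤ p := by rw [hp]; linarith [le_abs_self t]
  have hq0 : 0 ≤ q := by rw [hq]; linarith [neg_abs_le t]
  refine ⟨?_, by rw [Real.sq_sqrt hp0, Real.sq_sqrt hq0, hp, hq]; ring⟩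
  have heig : -I * eiφ = (s : ℂ) - η.im * I := by
    rw [heiφ, hκdef]; ring_nf; rw [I_sq]; ring
  rw [hC, heig, hp, hq]
  refine coin_mulVec_eq_smul_of_mul_eq η ?_ ?_
  · rw [hρ', hre]; exact Real.sqrt_sq_sub_sq_mul_sqrt hs.le ht
  · rw [hρ', hre]
    simpa [sub_eq_add_neg] using Real.sqrt_sq_sub_sq_mul_sqrt hs.le (t := -t) (by simpa using ht)

/-- (√p, √q)ᵀ is a unit eigenvector of the coin matrix with eigenvalue -i e^{iφ}. -/
theorem stmt_5 (η : ℂ) (hη : ‖η‖ < 1)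
    (κ : ℝ) (hκdef : κ = η.im) (hκ : κ ∈ Set.Ioo (-1:ℝ) 1)
    (ρ : ℝ) (hρ : ρ = Real.sqrt (1 - ‖η‖ ^ 2))
    (eiφ : ℂ) (heiφ : eiφ = (κ:ℂ) + I * (Real.sqrt (1 - κ^2) : ℝ))
    (C : Matrix (Fin 2) (Fin 2) ℂ) (hC : C = !![-η, (ρ:ℂ); (ρ:ℂ), (starRingEnd ℂ) η])
    (p q : ℝ)
    (hp : p = (1 - η.re / Real.sqrt (1 - κ^2)) / 2)
    (hq : q = (1 + η.re / Real.sqrt (1 - κ^2)) / 2) :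
    C.mulVec ![(Real.sqrt p : ℂ), (Real.sqrt q : ℂ)]
      = (-I * eiφ) • ![(Real.sqrt p : ℂ), (Real.sqrt q : ℂ)] ∧
    Real.sqrt p ^ 2 + Real.sqrt q ^ 2 = 1 :=
  stmt_5_general η hη κ hκdef ρ hρ eiφ heiφ C hC p q hp hq
end

section
/- With η, κ, ρ as above and A_± := √(√(1-κ²) ± Re(η)), the following identities hold: ρ = A₊A₋ and η - i e^{iφ} = A₊², where e^{iφ} = κ + i√(1-κ²). Consequently ker(C + i e^{iφ}) = ℂ·(A₋, A₊)ᵀ. -/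
/-!
Put `a = √(1 - κ²)`. Since `|η| < 1` we have `|Re η| < a`, so `A_±² = a ± Re η` and
`ρ² = a² - (Re η)² = A₊² A₋²`. As `i e^{iφ} = iκ - a`, the matrix `C + i e^{iφ}` equals
`[[-A₊², A₊A₋], [A₊A₋, -A₋²]] = -(A₊, -A₋)ᵀ (A₊, -A₋)`, a rank-one matrix whose kernel is the
line `A₊ v₀ = A₋ v₁` spanned by `(A₋, A₊)`.
-/

open Complex Matrix

theorem Real.sqrt_sq_sub_sq {a : ℝ} (ha : 0 ≤ a) (x : ℝ) :
    √(a ^ 2 - x ^ 2) = √(a + x) * √(a - x) := by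
  rcases le_or_gt 0 (a + x) with hx | hx
  · rw [← Real.sqrt_mul hx]
    ring_nf
  · rw [Real.sqrt_eq_zero_of_nonpos hx.le, zero_mul, Real.sqrt_eq_zero_of_nonpos]
    nlinarith

theorem Complex.abs_re_lt_sqrt_one_sub_im_sq {z : ℂ} (hz : ‖z‖ < 1) :
    |z.re| < √(1 - z.im ^ 2) := by
  rw [Real.lt_sqrt (abs_nonneg _), sq_abs]
  have hnorm := Complex.sq_norm z
  rw [normSq_apply] at hnorm
  nlinarith [norm_nonneg z]

theorem Complex.sub_I_mul_im_add_I_mul (z : ℂ) (a : ℝ) :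
    z - I * (z.im + I * a) = a + z.re := by
  apply Complex.ext <;> simp [add_comm]

theorem Complex.conj_add_I_mul_im_add_I_mul (z : ℂ) (a : ℝ) :
    starRingEnd ℂ z + I * (z.im + I * a) = -(a - z.re) := by
  apply Complex.ext <;> simp [sub_eq_add_neg, add_comm]

section FinTwo

variable {K : Type*} [Field K]

theorem Matrix.mulVec_neg_sq_mul_sq (p q : K) (v : Fin 2 → K) :
    !![-p ^ 2, p * q; p * q, -q ^ 2] *ᵥ v = (p * v 0 - q * v 1) • ![-p, q] := by
  ext i
  fin_cases i <;> simp [vecHead, vecTail] <;> ring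

theorem exists_eq_smul_iff_mul_eq {p q : K} (h : p ≠ 0 ∨ q ≠ 0) (v : Fin 2 → K) :
    (∃ c : K, v = c • ![q, p]) ↔ p * v 0 = q * v 1 := by
  constructor
  · rintro ⟨c, rfl⟩
    simp only [Pi.smul_apply, cons_val_zero, cons_val_one, smul_eq_mul]
    ring
  · intro hv
    rcases h with hp | hq
    · refine ⟨v 1 / p, funext fun i => ?_⟩
      fin_cases i <;> simp <;> field_simp
      linear_combination hv
    · refine ⟨v 0 / q, funext fun i => ?_⟩
      fin_cases i <;> simp <;> field_simp
      linear_combination -hv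

theorem Matrix.mulVec_neg_sq_mul_sq_eq_zero_iff {p q : K} (h : p ≠ 0 ∨ q ≠ 0)
    (v : Fin 2 → K) :
    !![-p ^ 2, p * q; p * q, -q ^ 2] *ᵥ v = 0 ↔ ∃ c : K, v = c • ![q, p] := by
  have hpq : ![-p, q] ≠ 0 := by
    contrapose! h
    simpa using And.intro (congrFun h 0) (congrFun h 1)
  rw [mulVec_neg_sq_mul_sq, smul_eq_zero_iff_left hpq, sub_eq_zero,
    exists_eq_smul_iff_mul_eq h]

end FinTwo
theorem stmt_6_general (η : ℂ) (hη : ‖η‖ < 1)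
    (κ : ℝ) (hκdef : κ = η.im)
    (ρ : ℝ) (hρ : ρ = Real.sqrt (1 - ‖η‖ ^ 2))
    (eiφ : ℂ) (heiφ : eiφ = (κ:ℂ) + I * (Real.sqrt (1 - κ^2) : ℝ))
    (C : Matrix (Fin 2) (Fin 2) ℂ) (hC : C = !![-η, (ρ:ℂ); (ρ:ℂ), (starRingEnd ℂ) η])
    (Ap Am : ℝ)
    (hAp : Ap = Real.sqrt (Real.sqrt (1 - κ^2) + η.re))
    (hAm : Am = Real.sqrt (Real.sqrt (1 - κ^2) - η.re)) :
    ρ = Ap * Am ∧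
    η - I * eiφ = ((Ap^2 : ℝ) : ℂ) ∧
    (∀ v : Fin 2 → ℂ, (C + (I * eiφ) • (1 : Matrix (Fin 2) (Fin 2) ℂ)).mulVec v = 0 ↔
      ∃ c : ℂ, v = c • ![(Am : ℂ), (Ap : ℂ)]) := by
  subst hκdef
  set a := √(1 - η.im ^ 2)
  have hre : |η.re| < a := abs_re_lt_sqrt_one_sub_im_sq hη
  have hAp2 : Ap ^ 2 = a + η.re := by
    rw [hAp, Real.sq_sqrt (by linarith [neg_abs_le η.re])]
  have hAm2 : Am ^ 2 = a - η.re := by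
    rw [hAm, Real.sq_sqrt (by linarith [le_abs_self η.re])]
  have hρ_eq : ρ = Ap * Am := by
    have him : η.im ^ 2 ≤ 1 := by nlinarith [abs_im_le_norm η, abs_nonneg η.im, sq_abs η.im]
    have hnorm : 1 - ‖η‖ ^ 2 = a ^ 2 - η.re ^ 2 := by
      rw [Real.sq_sqrt (by linarith), Complex.sq_norm, normSq_apply]
      ring
    rw [hρ, hAp, hAm, hnorm, Real.sqrt_sq_sub_sq (Real.sqrt_nonneg _)]
  have hAp0 : (Ap : ℂ) ≠ 0 := by
    rw [ofReal_ne_zero, hAp]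
    exact (Real.sqrt_pos.mpr (by linarith [neg_abs_le η.re])).ne'
  have hη_sub : η - I * eiφ = ((Ap ^ 2 : ℝ) : ℂ) := by
    rw [heiφ, sub_I_mul_im_add_I_mul, hAp2, ofReal_add]
  have hM : C + (I * eiφ) • (1 : Matrix (Fin 2) (Fin 2) ℂ) =
      !![-(Ap : ℂ) ^ 2, Ap * Am; Ap * Am, -(Am : ℂ) ^ 2] := by
    have hconj_add : starRingEnd ℂ η + I * eiφ = -((Am ^ 2 : ℝ) : ℂ) := by
      rw [heiφ, conj_add_I_mul_im_add_I_mul, hAm2, ofReal_sub]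
    rw [hC, hρ_eq]
    ext i j
    fin_cases i <;> fin_cases j <;> simp [neg_add_eq_sub, ← neg_sub η, hη_sub, hconj_add]
  refine ⟨hρ_eq, hη_sub, fun v => ?_⟩
  rw [hM, mulVec_neg_sq_mul_sq_eq_zero_iff (Or.inl hAp0)]

/-- With A_± = √(√(1-κ²) ± Re η): ρ = A₊A₋, η - i e^{iφ} = A₊², and
ker(C + i e^{iφ}) = ℂ·(A₋, A₊)ᵀ. -/
theorem stmt_6 (η : ℂ) (hη : ‖η‖ < 1)
    (κ : ℝ) (hκdef : κ = η.im) (hκ : κ ∈ Set.Ioo (-1:ℝ) 1)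
    (ρ : ℝ) (hρ : ρ = Real.sqrt (1 - ‖η‖ ^ 2))
    (eiφ : ℂ) (heiφ : eiφ = (κ:ℂ) + I * (Real.sqrt (1 - κ^2) : ℝ))
    (C : Matrix (Fin 2) (Fin 2) ℂ) (hC : C = !![-η, (ρ:ℂ); (ρ:ℂ), (starRingEnd ℂ) η])
    (Ap Am : ℝ)
    (hAp : Ap = Real.sqrt (Real.sqrt (1 - κ^2) + η.re))
    (hAm : Am = Real.sqrt (Real.sqrt (1 - κ^2) - η.re)) :
    ρ = Ap * Am ∧
    η - I * eiφ = ((Ap^2 : ℝ) : ℂ) ∧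
    (∀ v : Fin 2 → ℂ, (C + (I * eiφ) • (1 : Matrix (Fin 2) (Fin 2) ℂ)).mulVec v = 0 ↔
      ∃ c : ℂ, v = c • ![(Am : ℂ), (Ap : ℂ)]) :=
  stmt_6_general η hη κ hκdef ρ hρ eiφ heiφ C hC Ap Am hAp hAm
end

section
/- Let T be a bounded self-adjoint operator on a Hilbert space H with ‖T‖ ≤ 1. Then the kernel of the block operator [[1, T],[T, 1]] on H ⊕ H equals { (f+g, -f+g) : f ∈ ker(1-T), g ∈ ker(1+T) }. -/
/-- Kernel of block operator [[1,T],[T,1]] on H ⊕ H. -/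
theorem stmt_16 {H : Type*} [NormedAddCommGroup H] [InnerProductSpace ℂ H] [CompleteSpace H]
    (T : H →L[ℂ] H) (hT : IsSelfAdjoint T) (hTnorm : ‖T‖ ≤ 1) :
    {xy : H × H | xy.1 + T xy.2 = 0 ∧ T xy.1 + xy.2 = 0}
      = {xy : H × H | ∃ f g, T f = f ∧ T g = -g ∧ xy = (f + g, -f + g)} := by
  ext ⟨x, y⟩
  simp only [Set.mem_setOf_eq]
  constructor
  · rintro ⟨h1, h2⟩
    have hTy : T y = -x := by rw [eq_neg_iff_add_eq_zero, add_comm]; exact h1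
    have hTx : T x = -y := by rw [eq_neg_iff_add_eq_zero]; exact h2
    refine ⟨(2:ℂ)⁻¹ • (x - y), (2:ℂ)⁻¹ • (x + y), ?_, ?_, ?_⟩
    · rw [map_smul, map_sub, hTx, hTy]; module
    · rw [map_smul, map_add, hTx, hTy]; module
    · refine Prod.ext ?_ ?_ <;> · simp only; module
  · rintro ⟨f, g, hf, hg, h⟩
    injection h with h1 h2
    subst h1 h2
    refine ⟨?_, ?_⟩ <;> simp [hf, hg] <;> abel
end

section
/- Let K: ℓ²(V) → ℓ²(A) be an isometry (K*K = 1), S a unitary involution on ℓ²(A) (S² = 1, S* = S), and T = K*SK. If f ∈ ker(1-T), then SKf = Kf. -/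
local notation "⟪" x ", " y "⟫" => @inner ℂ _ _ x y


/-- If K is an isometry, S a self-adjoint unitary, T = K*SK, then Tf = f implies SKf = Kf. -/
theorem stmt_17 {V A : Type*}
    [NormedAddCommGroup V] [InnerProductSpace ℂ V] [CompleteSpace V]
    [NormedAddCommGroup A] [InnerProductSpace ℂ A] [CompleteSpace A]
    (K : V →L[ℂ] A) (hK : (ContinuousLinearMap.adjoint K).comp K = ContinuousLinearMap.id ℂ V)
    (S : A →L[ℂ] A) (hS2 : S.comp S = ContinuousLinearMap.id ℂ A) (hSsa : IsSelfAdjoint S)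
    (T : V →L[ℂ] V)
    (hT : T = (ContinuousLinearMap.adjoint K).comp (S.comp K))
    (f : V) (hf : T f = f) :
    S (K f) = K f := by
  have hSS : S (S (K f)) = K f := by
    have := congrArg (fun L => L (K f)) hS2
    simpa using this
  have hKK : ContinuousLinearMap.adjoint K (K f) = f := by
    have := congrArg (fun L => L f) hK
    simpa using this
  have hTf : ContinuousLinearMap.adjoint K (S (K f)) = f := by
    rw [hT] at hf
    simpa using hf
  have hSadj : ContinuousLinearMap.adjoint S = S := hSsa
  have key : ⟪S (K f), K f⟫ = ⟪f, f⟫ := by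
    rw [← ContinuousLinearMap.adjoint_inner_left K, hTf]
  have key2 : ⟪K f, S (K f)⟫ = ⟪f, f⟫ := by
    have h : ⟪K f, S (K f)⟫ = starRingEnd ℂ ⟪S (K f), K f⟫ := (inner_conj_symm _ _).symm
    rw [h, key, inner_conj_symm]
  have hKfKf : ⟪K f, K f⟫ = ⟪f, f⟫ := by
    rw [← ContinuousLinearMap.adjoint_inner_left K, hKK]
  have hSKf : ⟪S (K f), S (K f)⟫ = ⟪f, f⟫ := by
    rw [← ContinuousLinearMap.adjoint_inner_left S, hSadj, hSS, hKfKf]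
  have hzero : ⟪S (K f) - K f, S (K f) - K f⟫ = 0 := by
    rw [inner_sub_sub_self, hSKf, key, key2, hKfKf]
    ring
  exact sub_eq_zero.mp (inner_self_eq_zero.mp hzero)
end
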